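/- Let N ⊴ G be finite groups. Suppose Z(G) ∩ N = 1 and N has exactly two non-central G-conjugacy classes whose sizes are coprime, and N is not a group of prime power order. Then N has an element of order 2 or N is a Frobenius group whose kernel is elementary abelian of exponent p and whose complement is cyclic of prime order q. -/
import Mathlib


/-- The `G`-conjugacy class of `x`. -/
def gClass {G : Type*} [Group G] (x : G) : Set G := {y | ∃ g : G, y = g * x * g⁻¹}

lemma mem_gClass_self {G : Type*} [Group G] (x : G) : x ∈ gClass x :=
  ⟨1, by simp⟩

lemma image_inv_gClass {G : Type*} [Group G] (x : G) :
    Inv.inv '' gClass x = gClass x⁻¹ := by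
  ext z
  constructor
  · rintro ⟨w, ⟨g, rfl⟩, rfl⟩
    exact ⟨g, by group⟩
  · rintro ⟨g, rfl⟩
    exact ⟨g * x * g⁻¹, ⟨g, rfl⟩, by group⟩

lemma even_ncard_of_inv_closed {G : Type*} [Group G] [Fintype G] {s : Set G}
    (hcl : ∀ a ∈ s, a⁻¹ ∈ s) (hfp : ∀ a ∈ s, a⁻¹ ≠ a) : Even s.ncard := by
  classical
  have h : ∑ _x ∈ s.toFinset, (1 : ZMod 2) = 0 := by
    refine Finset.sum_involution (fun a _ => a⁻¹) (fun a ha => by decide)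
      (fun a ha h1 => hfp a (Set.mem_toFinset.mp ha)) ?_ (fun a ha => inv_inv a)
    intro a ha
    exact Set.mem_toFinset.mpr (hcl a (Set.mem_toFinset.mp ha))
  rw [Finset.sum_const, nsmul_eq_mul, mul_one,
    ZMod.natCast_eq_zero_iff] at h
  rw [Set.ncard_eq_toFinset_card']
  exact even_iff_two_dvd.mpr h

/-- If `Z(G) ∩ N = 1`, `N` has exactly two non-central `G`-conjugacy classes with coprime
sizes, and `|N|` is not a prime power, then `N` has an element of order 2, or `N` is a
Frobenius group with elementary abelian kernel of exponent `p` and cyclic complement of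
prime order `q`. -/
theorem stmt_10 {G : Type*} [Group G] [Fintype G] (N : Subgroup G) [N.Normal]
    (hZ : Subgroup.center G ⊓ N = ⊥)
    (x y : G) (hxN : x ∈ N) (hyN : y ∈ N)
    (hxZ : x ∉ Subgroup.center G) (hyZ : y ∉ Subgroup.center G)
    (hne : gClass x ≠ gClass y)
    (hall : ∀ w ∈ N, w ∉ Subgroup.center G → gClass w = gClass x ∨ gClass w = gClass y)
    (hcop : Nat.Coprime (gClass x).ncard (gClass y).ncard)
    (hnotpp : ¬ ∃ p : ℕ, p.Prime ∧ IsPGroup p N) :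
    (∃ n ∈ N, orderOf n = 2) ∨
      ∃ K H : Subgroup G, K ≤ N ∧ H ≤ N ∧
        (∀ n ∈ N, ∃ k ∈ K, ∃ h ∈ H, n = k * h) ∧ K ⊓ H = ⊥ ∧
        (∀ k ∈ K, ∀ h ∈ H, h * k * h⁻¹ ∈ K) ∧
        (∀ h ∈ H, h ≠ 1 → ∀ k ∈ K, h * k * h⁻¹ = k → k = 1) ∧
        ∃ p q : ℕ, p.Prime ∧ q.Prime ∧ p ≠ q ∧
          (∀ k ∈ K, k ≠ 1 → orderOf k = p) ∧
          (∀ a ∈ K, ∀ b ∈ K, a * b = b * a) ∧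
          Nat.card H = q := by
  classical
  left
  by_contra h2
  push_neg at h2
  -- no element of order 2 in N; elements of classes are not self-inverse
  have hmemN : ∀ w : G, ∀ z ∈ gClass w, w ∈ N → z ∈ N := by
    rintro w z ⟨g, rfl⟩ hw
    exact Subgroup.Normal.conj_mem ‹N.Normal› w hw g
  have hmemZ : ∀ w : G, ∀ z ∈ gClass w, w ∉ Subgroup.center G → z ∉ Subgroup.center G := by
    rintro w z ⟨g, rfl⟩ hw hz
    have h' := ((Subgroup.center G).normal_of_characteristic).conj_mem _ hz g⁻¹
    rw [show g⁻¹ * (g * w * g⁻¹) * g⁻¹⁻¹ = w by group] at h'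
    exact hw h'
  have hfp : ∀ w : G, w ∈ N → w ∉ Subgroup.center G → ∀ z ∈ gClass w, z⁻¹ ≠ z := by
    intro w hwN hwZ z hz heq
    have hzN : z ∈ N := hmemN w z hz hwN
    have hzZ : z ∉ Subgroup.center G := hmemZ w z hz hwZ
    have hz1 : z ≠ 1 := fun h => hzZ (h ▸ (Subgroup.center G).one_mem)
    have hz2 : z ^ 2 = 1 := by
      nth_rewrite 1 [pow_two]
      nth_rewrite 1 [← heq]
      exact inv_mul_cancel z
    exact h2 z hzN (orderOf_eq_prime hz2 hz1)
  -- inv x not central, in N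
  have hxiN : x⁻¹ ∈ N := N.inv_mem hxN
  have hxiZ : x⁻¹ ∉ Subgroup.center G := fun h => hxZ ((Subgroup.center G).inv_mem_iff.mp h)
  have hyiN : y⁻¹ ∈ N := N.inv_mem hyN
  have hyiZ : y⁻¹ ∉ Subgroup.center G := fun h => hyZ ((Subgroup.center G).inv_mem_iff.mp h)
  have ncard_inv : ∀ w : G, (gClass w⁻¹).ncard = (gClass w).ncard := by
    intro w
    rw [← image_inv_gClass, Set.ncard_image_of_injective _ inv_injective]
  have hswap : gClass x⁻¹ = gClass y → False := by
    intro hA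
    have hsize : (gClass x).ncard = (gClass y).ncard := by rw [← hA, ncard_inv]
    rw [← hsize, Nat.Coprime, Nat.gcd_self] at hcop
    obtain ⟨a, ha⟩ := Set.ncard_eq_one.mp hcop
    have hxa : x = a := by
      have := mem_gClass_self x
      rw [ha] at this; exact this
    refine hxZ (Subgroup.mem_center_iff.mpr fun g => ?_)
    have : g * x * g⁻¹ ∈ gClass x := ⟨g, rfl⟩
    rw [ha, ← hxa] at this
    have := Set.mem_singleton_iff.mp this
    calc g * x = (g * x * g⁻¹) * g := by group
    _ = x * g := by rw [this]
  rcases hall x⁻¹ hxiN hxiZ with hBx | hA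
  · -- gClass x⁻¹ = gClass x
    rcases hall y⁻¹ hyiN hyiZ with hBy' | hBy
    · -- gClass y⁻¹ = gClass x  →  gClass y = gClass x⁻¹ = gClass x, contra hne
      have : gClass y = gClass x⁻¹ := by
        have h1 : gClass y = Inv.inv '' gClass y⁻¹ := by
          rw [image_inv_gClass, inv_inv]
        rw [h1, hBy', ← hBx, image_inv_gClass, inv_inv, hBx]
      rw [hBx] at this
      exact hne this.symm
    · -- both closed under inversion; both even → contradiction with coprime
      have hclx : ∀ a ∈ gClass x, a⁻¹ ∈ gClass x := by
        intro a ha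
        rw [← hBx, ← image_inv_gClass]
        exact ⟨a, ha, rfl⟩
      have hcly : ∀ a ∈ gClass y, a⁻¹ ∈ gClass y := by
        intro a ha
        rw [← hBy, ← image_inv_gClass]
        exact ⟨a, ha, rfl⟩
      have hex : Even (gClass x).ncard :=
        even_ncard_of_inv_closed hclx (fun a ha => hfp x hxN hxZ a ha)
      have hey : Even (gClass y).ncard :=
        even_ncard_of_inv_closed hcly (fun a ha => hfp y hyN hyZ a ha)
      have : (2 : ℕ) ∣ 1 := by
        rw [← hcop]
        exact Nat.dvd_gcd (even_iff_two_dvd.mp hex) (even_iff_two_dvd.mp hey)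
      norm_num at this
  · exact hswap hA
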